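/- Let X be a topological ℂ-vector space of complex-valued functions on the open disc D(0,r) ⊆ ℂ containing all polynomial functions, such that (i) for each w with |w| < r the evaluation map f ↦ f(w) is continuous on X, and (ii) polynomial functions are dense in X. Let F : X → ℂ be a continuous linear functional with F(1) = 1 and F((z − α)^n) ≠ 0 for all n ≥ 1 and all α with |α| ≥ r. Then there exists w with |w| < r such that F(f) = f(w) for all f ∈ X. -/

import Mathlib

/-!
Put `φ = F ∘ P`, `w = φ X` and `d k = φ ((X - w) ^ k)`. The polynomial `β ↦ φ ((X - (w - β)) ^ n)`
is monic of degree `n` with coefficients `(n choose k) * d k`, and the hypothesis on `F` puts its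
roots in the disc of radius `r + ‖w‖`. If `d 1 = ⋯ = d k = 0`, Newton's identities make the
`(k + 1)`-st power sum of these roots equal to `±(k + 1) (n choose (k + 1)) d (k + 1)`, which is at
most `n (r + ‖w‖) ^ (k + 1)` in norm; letting `n → ∞` forces `d (k + 1) = 0`. So `φ` is evaluation
at `w`, and density of the polynomials extends this to all of `E`.
-/

open Polynomial Finset Filter

namespace Multiset

theorem sum_map_pow_eq_of_esymm_eq_zero {R : Type*} [CommRing R] (s : Multiset R) {k : ℕ}
    (hk : 0 < k) (h : ∀ i, 0 < i → i < k → s.esymm i = 0) :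
    (s.map (· ^ k)).sum = (-1) ^ (k + 1) * k * s.esymm k := by
  obtain ⟨l, rfl⟩ : ∃ l : List R, (l : Multiset R) = s := ⟨s.toList, s.coe_toList⟩
  have huniv : (univ : Finset (Fin l.length)).val.map l.get = (l : Multiset R) := by
    rw [Fin.univ_def]
    exact congrArg _ (List.map_get_finRange l)
  have hesymm (j : ℕ) : MvPolynomial.aeval l.get (MvPolynomial.esymm _ R j) = esymm l j := by
    rw [MvPolynomial.aeval_esymm_eq_multiset_esymm, huniv]
  have hpsum (j : ℕ) :
      MvPolynomial.aeval l.get (MvPolynomial.psum _ R j) = ((l : Multiset R).map (· ^ j)).sum := by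
    simp only [MvPolynomial.psum, map_sum, map_pow, MvPolynomial.aeval_X]
    rw [Finset.sum, ← huniv, Multiset.map_map]
    rfl
  have newton := congrArg (MvPolynomial.aeval l.get)
    (MvPolynomial.psum_eq_mul_esymm_sub_sum (Fin l.length) R k hk)
  simp only [map_sub, map_mul, map_pow, map_neg, map_one, map_natCast, map_sum, hesymm, hpsum]
    at newton
  rw [newton, sub_eq_self]
  refine Finset.sum_eq_zero fun a ha => ?_
  simp only [Finset.mem_filter, Set.mem_Ioo] at ha
  rw [h a.1 ha.2.1 ha.2.2, mul_zero, zero_mul]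

theorem norm_sum_map_pow_le {𝕜 : Type*} [NormedDivisionRing 𝕜] (s : Multiset 𝕜) {B : ℝ}
    (hB : ∀ x ∈ s, ‖x‖ ≤ B) (k : ℕ) : ‖(s.map (· ^ k)).sum‖ ≤ card s * B ^ k := by
  refine (norm_multiset_sum_le _).trans ?_
  rw [Multiset.map_map, ← nsmul_eq_mul, ← Multiset.card_map (fun x : 𝕜 => ‖x ^ k‖) s]
  refine Multiset.sum_le_card_nsmul _ _ fun y hy => ?_
  obtain ⟨x, hx, rfl⟩ := Multiset.mem_map.mp hy
  simpa only [Function.comp_apply, norm_pow] using pow_le_pow_left₀ (norm_nonneg x) (hB x hx) k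

end Multiset

theorem Nat.tendsto_choose_atTop {k : ℕ} (hk : k ≠ 0) :
    Tendsto (fun n : ℕ => (n.choose k : ℝ)) atTop atTop := by
  refine tendsto_atTop_mono (Nat.pow_le_choose k) (Tendsto.atTop_div_const (by positivity) ?_)
  exact (tendsto_pow_atTop hk).comp <| tendsto_natCast_atTop_atTop.comp <|
    (tendsto_sub_atTop_nat k).comp (tendsto_add_atTop_nat 1)

theorem eq_zero_of_eventually_choose_mul_le {k : ℕ} (hk : k ≠ 0) {a b : ℝ} (ha : 0 ≤ a)
    (h : ∀ᶠ n : ℕ in atTop, (n.choose k : ℝ) * a ≤ b) : a = 0 := by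
  by_contra ha0
  have hgrow := (Nat.tendsto_choose_atTop hk).atTop_mul_const (lt_of_le_of_ne ha (Ne.symm ha0))
  obtain ⟨n, hlt, hle⟩ := ((hgrow.eventually_gt_atTop b).and h).exists
  exact hlt.not_ge hle

namespace Polynomial

section CommRing

variable {R : Type*} [CommRing R] (φ : R[X] →ₗ[R] R) (w : R)

noncomputable def momentPoly (n : ℕ) : R[X] :=
  ∑ j ∈ range (n + 1), monomial j ((n.choose j : R) * φ ((X - C w) ^ (n - j)))

theorem eval_momentPoly (n : ℕ) (β : R) :
    (momentPoly φ w n).eval β = φ ((X - C (w - β)) ^ n) := by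
  have hsplit : X - C (w - β) = C β + (X - C w) := by rw [C_sub]; ring
  rw [hsplit, add_pow, map_sum, momentPoly, eval_finsetSum]
  refine sum_congr rfl fun j _ => ?_
  have hsmul : C β ^ j * (X - C w) ^ (n - j) * (n.choose j : R[X]) =
      (β ^ j * n.choose j) • (X - C w) ^ (n - j) := by
    rw [smul_eq_C_mul, C_mul, C_pow, map_natCast]
    ring
  rw [eval_monomial, hsmul, map_smul, smul_eq_mul]
  ring

theorem coeff_momentPoly (n j : ℕ) :
    (momentPoly φ w n).coeff j =
      if j ≤ n then (n.choose j : R) * φ ((X - C w) ^ (n - j)) else 0 := by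
  simp only [momentPoly, finsetSum_coeff, coeff_monomial, sum_ite_eq', mem_range, Nat.lt_succ_iff]

theorem natDegree_momentPoly_le (n : ℕ) : (momentPoly φ w n).natDegree ≤ n :=
  natDegree_le_iff_coeff_eq_zero.mpr fun j hj => by rw [coeff_momentPoly, if_neg (by omega)]

variable {φ}

theorem coeff_momentPoly_self (hφ1 : φ 1 = 1) (n : ℕ) : (momentPoly φ w n).coeff n = 1 := by
  rw [coeff_momentPoly, if_pos le_rfl, Nat.choose_self, Nat.sub_self, pow_zero, hφ1,
    Nat.cast_one, one_mul]

theorem monic_momentPoly (hφ1 : φ 1 = 1) (n : ℕ) : (momentPoly φ w n).Monic :=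
  monic_of_natDegree_le_of_coeff_eq_one n (natDegree_momentPoly_le φ w n)
    (coeff_momentPoly_self w hφ1 n)

theorem natDegree_momentPoly [Nontrivial R] (hφ1 : φ 1 = 1) (n : ℕ) :
    (momentPoly φ w n).natDegree = n :=
  natDegree_eq_of_le_of_coeff_ne_zero (natDegree_momentPoly_le φ w n)
    (by rw [coeff_momentPoly_self w hφ1]; exact one_ne_zero)

theorem eq_eval_of_map_X_sub_C_pow_eq_zero (hφ1 : φ 1 = 1)
    (h : ∀ k, 0 < k → φ ((X - C w) ^ k) = 0) (p : R[X]) : φ p = p.eval w := by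
  conv_lhs => rw [← sum_taylor_eq p w]
  rw [Polynomial.sum, map_sum, ← taylor_coeff_zero, Finset.sum_eq_single 0]
  · rw [pow_zero, ← smul_eq_C_mul, map_smul, hφ1, smul_eq_mul, mul_one]
  · intro k _ hk
    rw [← smul_eq_C_mul, map_smul, h k (Nat.pos_of_ne_zero hk), smul_zero]
  · intro h0
    rw [notMem_support_iff.mp h0, C_0, zero_mul, map_zero]

end CommRing

theorem esymm_roots_momentPoly {K : Type*} [Field K] [IsAlgClosed K] {φ : K[X] →ₗ[K] K}
    (hφ1 : φ 1 = 1) (w : K) {n i : ℕ} (hi : i ≤ n) :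
    (momentPoly φ w n).roots.esymm i = (-1) ^ i * n.choose i * φ ((X - C w) ^ i) := by
  have vieta := coeff_eq_esymm_roots_of_card (p := momentPoly φ w n)
    IsAlgClosed.card_roots_eq_natDegree (k := n - i) (by rw [natDegree_momentPoly w hφ1]; omega)
  rw [natDegree_momentPoly w hφ1, (monic_momentPoly w hφ1 n).leadingCoeff, coeff_momentPoly,
    if_pos (Nat.sub_le n i), Nat.sub_sub_self hi, Nat.choose_symm hi, one_mul] at vieta
  rw [mul_assoc, vieta, ← mul_assoc, ← pow_add, ← two_mul, pow_mul, neg_one_sq, one_pow, one_mul]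

section Complex

variable {φ : ℂ[X] →ₗ[ℂ] ℂ} {r : ℝ}

theorem norm_lt_of_mem_roots_momentPoly (hφ1 : φ 1 = 1) (w : ℂ) {n : ℕ}
    (hφn : ∀ α : ℂ, r ≤ ‖α‖ → φ ((X - C α) ^ n) ≠ 0) {β : ℂ}
    (hβ : β ∈ (momentPoly φ w n).roots) : ‖β‖ < r + ‖w‖ := by
  have hroot : φ ((X - C (w - β)) ^ n) = 0 := by
    rw [← eval_momentPoly]
    exact (mem_roots (monic_momentPoly w hφ1 n).ne_zero).mp hβ
  have hwβ : ‖w - β‖ < r := not_le.mp fun h => hφn _ h hroot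
  calc ‖β‖ = ‖w - (w - β)‖ := by rw [sub_sub_cancel]
    _ ≤ ‖w‖ + ‖w - β‖ := norm_sub_le _ _
    _ < r + ‖w‖ := by linarith

theorem map_X_sub_C_pow_succ_eq_zero (hφ1 : φ 1 = 1)
    (hφ : ∀ n : ℕ, 1 ≤ n → ∀ α : ℂ, r ≤ ‖α‖ → φ ((X - C α) ^ n) ≠ 0) (w : ℂ) {k : ℕ}
    (hk : k ≠ 0) (hlow : ∀ i, 0 < i → i ≤ k → φ ((X - C w) ^ i) = 0) :
    φ ((X - C w) ^ (k + 1)) = 0 := by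
  set d := φ ((X - C w) ^ (k + 1))
  suffices hchoose_le : ∀ N ≥ k, (N.choose k : ℝ) * ‖d‖ ≤ (r + ‖w‖) ^ (k + 1) from
    norm_eq_zero.mp (eq_zero_of_eventually_choose_mul_le hk (norm_nonneg d)
      (eventually_atTop.mpr ⟨k, hchoose_le⟩))
  intro N hN
  set s := (momentPoly φ w (N + 1)).roots
  have hesymm_low : ∀ i, 0 < i → i < k + 1 → s.esymm i = 0 := fun i hi hik => by
    rw [esymm_roots_momentPoly hφ1 w (by omega), hlow i hi (by omega), mul_zero]
  have hpsum := s.sum_map_pow_eq_of_esymm_eq_zero k.succ_pos hesymm_low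
  have hbound := s.norm_sum_map_pow_le (fun β hβ =>
    (norm_lt_of_mem_roots_momentPoly hφ1 w (hφ (N + 1) (by omega)) hβ).le) (k + 1)
  rw [hpsum, esymm_roots_momentPoly hφ1 w (by omega), IsAlgClosed.card_roots_eq_natDegree,
    natDegree_momentPoly w hφ1] at hbound
  simp only [norm_mul, norm_pow, norm_neg, norm_one, one_pow, one_mul, Complex.norm_natCast]
    at hbound
  have hchoose : ((N + 1) * N.choose k : ℝ) = (N + 1).choose (k + 1) * (k + 1) := by
    exact_mod_cast Nat.add_one_mul_choose_eq N k
  push_cast at hbound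
  refine le_of_mul_le_mul_left ?_ (by positivity : (0 : ℝ) < N + 1)
  rw [← mul_assoc, hchoose]
  linarith

theorem map_X_sub_C_map_X_pow_eq_zero (hφ1 : φ 1 = 1)
    (hφ : ∀ n : ℕ, 1 ≤ n → ∀ α : ℂ, r ≤ ‖α‖ → φ ((X - C α) ^ n) ≠ 0) :
    ∀ k, 0 < k → φ ((X - C (φ X)) ^ k) = 0 := by
  intro k
  induction k using Nat.strong_induction_on with
  | _ k ih =>
    intro hk
    match k, hk with
    | 1, _ => rw [pow_one, map_sub, ← mul_one (C _), ← smul_eq_C_mul, map_smul, hφ1, smul_eq_mul,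
        mul_one, sub_self]
    | k + 2, _ =>
      exact map_X_sub_C_pow_succ_eq_zero hφ1 hφ _ k.succ_ne_zero fun i hi _ => ih i (by omega) hi

theorem norm_map_X_lt (hφ1 : φ 1 = 1)
    (hφ : ∀ n : ℕ, 1 ≤ n → ∀ α : ℂ, r ≤ ‖α‖ → φ ((X - C α) ^ n) ≠ 0) : ‖φ X‖ < r :=
  not_le.mp fun h => hφ 1 le_rfl _ h (map_X_sub_C_map_X_pow_eq_zero hφ1 hφ 1 one_pos)

theorem eq_eval_map_X (hφ1 : φ 1 = 1)
    (hφ : ∀ n : ℕ, 1 ≤ n → ∀ α : ℂ, r ≤ ‖α‖ → φ ((X - C α) ^ n) ≠ 0) (p : ℂ[X]) :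
    φ p = p.eval (φ X) :=
  eq_eval_of_map_X_sub_C_pow_eq_zero _ hφ1 (map_X_sub_C_map_X_pow_eq_zero hφ1 hφ) p

end Complex

end Polynomial

theorem gkz_metric_space_general (r : ℝ)
    (E : Type) [AddCommGroup E] [Module ℂ E] [TopologicalSpace E]
    (ι : E →ₗ[ℂ] ({z : ℂ // ‖z‖ < r} → ℂ))
    (P : Polynomial ℂ →ₗ[ℂ] E)
    (hP : ∀ (p : Polynomial ℂ) (z : {z : ℂ // ‖z‖ < r}), ι (P p) z = p.eval z.1)
    (heval : ∀ w : {z : ℂ // ‖z‖ < r}, Continuous fun f : E => ι f w)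
    (hdense : DenseRange P)
    (F : E →ₗ[ℂ] ℂ) (hFc : Continuous F) (hF1 : F (P 1) = 1)
    (hF : ∀ n : ℕ, 1 ≤ n → ∀ α : ℂ, r ≤ ‖α‖ →
      F (P ((Polynomial.X - Polynomial.C α) ^ n)) ≠ 0) :
    ∃ w : {z : ℂ // ‖z‖ < r}, ∀ f : E, F f = ι f w := by
  let w : {z : ℂ // ‖z‖ < r} := ⟨F.comp P X, norm_map_X_lt hF1 hF⟩
  have hpoly : ∀ p, F (P p) = ι (P p) w := fun p => by
    rw [hP]
    exact eq_eval_map_X (φ := F.comp P) hF1 hF p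
  exact ⟨w, congrFun (hdense.equalizer hFc (heval w) (funext hpoly))⟩

/-- GKZ theorem for topological vector spaces of functions on the disc D(0,r):
a continuous linear functional with F(1)=1 that is nonzero on the powers
(z-α)^n, |α| ≥ r, is a point evaluation at some point of the disc. -/
theorem gkz_metric_space (r : ℝ) (hr : 0 < r)
    (E : Type) [AddCommGroup E] [Module ℂ E] [TopologicalSpace E]
    (ι : E →ₗ[ℂ] ({z : ℂ // ‖z‖ < r} → ℂ)) (hι : Function.Injective ι)
    (P : Polynomial ℂ →ₗ[ℂ] E)
    (hP : ∀ (p : Polynomial ℂ) (z : {z : ℂ // ‖z‖ < r}), ι (P p) z = p.eval z.1)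
    (heval : ∀ w : {z : ℂ // ‖z‖ < r}, Continuous fun f : E => ι f w)
    (hdense : DenseRange P)
    (F : E →ₗ[ℂ] ℂ) (hFc : Continuous F) (hF1 : F (P 1) = 1)
    (hF : ∀ n : ℕ, 1 ≤ n → ∀ α : ℂ, r ≤ ‖α‖ →
      F (P ((Polynomial.X - Polynomial.C α) ^ n)) ≠ 0) :
    ∃ w : {z : ℂ // ‖z‖ < r}, ∀ f : E, F f = ι f w :=
  gkz_metric_space_general r E ι P hP heval hdense F hFc hF1 hF
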